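/- Let r ≥ 2 and n ≥ 1. In B(r,n) one has the identity D_n = X_n^r. -/

import Mathlib

/-!
The monomial braid group `B(r,n)` (independent of `r`) is presented with generators
`ρ_0, …, ρ_{n-1}` and relations `(ρ_0ρ_1)^2 = (ρ_1ρ_0)^2`,
`ρ_iρ_{i+1}ρ_i = ρ_{i+1}ρ_iρ_{i+1}` (`1 ≤ i ≤ n-2`), `ρ_iρ_j = ρ_jρ_i` (`|i-j| > 1`).
We realize it as a presented group on generators indexed by `ℕ`, where the superfluous
generators `ρ_k` for `k ≥ n` are killed by extra relators.  The full monomial group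
`G(r,n)` is the quotient of `B(r,n)` by the relations `ρ_0^r = ρ_1^2 = ⋯ = ρ_{n-1}^2 = 1`,
and the pure monomial braid group `P(r,n)` is the kernel of the quotient map.
-/

namespace MonomialBraid

/-- Generator `ρ_k` of the free group. -/
def g (k : ℕ) : FreeGroup ℕ := FreeGroup.of k

/-- Relators of the monomial braid group `B(r,n)` (independent of `r`),
together with relators killing the junk generators `ρ_k`, `k ≥ n`. -/
def brels (n : ℕ) : Set (FreeGroup ℕ) :=
  {w | ∃ k, n ≤ k ∧ w = g k} ∪
  {w | 2 ≤ n ∧ w = (g 0 * g 1) ^ 2 * ((g 1 * g 0) ^ 2)⁻¹} ∪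
  {w | ∃ i, 1 ≤ i ∧ i + 1 ≤ n - 1 ∧
      w = g i * g (i + 1) * g i * (g (i + 1) * g i * g (i + 1))⁻¹} ∪
  {w | ∃ i j, i + 2 ≤ j ∧ j ≤ n - 1 ∧ w = g i * g j * (g j * g i)⁻¹}

/-- The monomial braid group `B(r,n)` (independent of `r`). -/
abbrev B (n : ℕ) := PresentedGroup (brels n)

/-- The generator `ρ_k` of `B(r,n)`. -/
def rh (n k : ℕ) : B n := PresentedGroup.of k

/-- `ζ_n = (ρ_0 ρ_1 ⋯ ρ_{n-1})^n`. -/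
def zeta (n : ℕ) : B n := (((List.range n).map (rh n)).prod) ^ n

/-- `X_i = ρ_{i-1} ⋯ ρ_2 ρ_1 ρ_0 ρ_1 ρ_2 ⋯ ρ_{i-1}` for `1 ≤ i ≤ n`. -/
def XX (n i : ℕ) : B n :=
  (((List.range (i - 1)).reverse.map fun k => rh n (k + 1)).prod) * rh n 0 *
    (((List.range (i - 1)).map fun k => rh n (k + 1)).prod)

/-- `C_j = ρ_{j-1} ⋯ ρ_2 ρ_1 ρ_0^r ρ_1⁻¹ ρ_2⁻¹ ⋯ ρ_{j-1}⁻¹` for `1 ≤ j ≤ n`. -/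
def CC (r n j : ℕ) : B n :=
  (((List.range (j - 1)).reverse.map fun k => rh n (k + 1)).prod) * rh n 0 ^ r *
    ((((List.range (j - 1)).reverse.map fun k => rh n (k + 1)).prod))⁻¹

/-- `A^{(q)}(i,j) = X_i^{q-r} ⋅ ρ_{j-1} ⋯ ρ_{i+1} ρ_i^2 ρ_{i+1}⁻¹ ⋯ ρ_{j-1}⁻¹ ⋅ X_i^{r-q}`
for `1 ≤ i < j ≤ n`, `1 ≤ q ≤ r`. -/
def Aq (r n i j q : ℕ) : B n :=
  XX n i ^ ((q : ℤ) - (r : ℤ)) *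
    ((((List.range (j - 1 - i)).reverse.map fun k => rh n (i + 1 + k)).prod) * rh n i ^ 2 *
      ((((List.range (j - 1 - i)).reverse.map fun k => rh n (i + 1 + k)).prod))⁻¹) *
    XX n i ^ ((r : ℤ) - (q : ℤ))

/-- `A^{[q]}(i,j) = A^{(q)}(i,j) A^{(q+1)}(i,j) ⋯ A^{(r-1)}(i,j)` (for `q < r`). -/
def Abr (r n i j q : ℕ) : B n :=
  ((List.range (r - q)).map fun t => Aq r n i j (q + t)).prod

/-- `V^{(q)}(i,j) = A^{(q)}(i,j) A^{(q)}(i+1,j) ⋯ A^{(q)}(j-1,j)`. -/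
def VV (r n i j q : ℕ) : B n :=
  ((List.range (j - i)).map fun t => Aq r n (i + t) j q).prod

/-- `D_k = A^{[1]}(k-1,k) A^{[1]}(k-2,k) ⋯ A^{[1]}(1,k) ⋅ C_k ⋅ V^{(r)}(1,k)`. -/
def DD (r n k : ℕ) : B n :=
  (((List.range (k - 1)).map fun t => Abr r n (k - 1 - t) k 1).prod) * CC r n k * VV r n 1 k r

/-- The relations defining the full monomial group `G(r,n)` as a quotient of `B(r,n)`:
`ρ_0^r = ρ_1^2 = ⋯ = ρ_{n-1}^2 = 1`. -/
def grels (r n : ℕ) : Set (B n) :=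
  {w | w = rh n 0 ^ r} ∪ {w | ∃ i, 1 ≤ i ∧ i ≤ n - 1 ∧ w = rh n i ^ 2}

/-- The normal closure of the relations of `G(r,n)` in `B(r,n)`; thus
`G(r,n) = B(r,n) ⧸ NG r n`. -/
def NG (r n : ℕ) : Subgroup (B n) := Subgroup.normalClosure (grels r n)

instance NG_normal (r n : ℕ) : (NG r n).Normal := Subgroup.normalClosure_normal

/-- The pure monomial braid group `P(r,n)`, the kernel of the quotient map
`B(r,n) → G(r,n)`. -/
def Pm (r n : ℕ) : Subgroup (B n) := MonoidHom.ker (QuotientGroup.mk' (NG r n))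


/-! ### Auxiliary development for the proof of `D_n = X_n^r` -/

section Aux

open List

/-- The canonical projection from the free group to `B n`. -/
def pr (n : ℕ) : FreeGroup ℕ →* B n := QuotientGroup.mk' _

lemma pr_g (n k : ℕ) : pr n (g k) = rh n k := rfl

lemma pr_rel {n : ℕ} {w : FreeGroup ℕ} (h : w ∈ brels n) : pr n w = 1 := by
  have h1 : pr n w = QuotientGroup.mk w := rfl
  rw [h1]; refine (QuotientGroup.eq_one_iff (N := Subgroup.normalClosure (brels n)) w).2 ?_
  exact Subgroup.subset_normalClosure h

lemma rho_junk {n k : ℕ} (h : n ≤ k) : rh n k = 1 := by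
  have := pr_rel (n := n) (Or.inl (Or.inl (Or.inl ⟨k, h, rfl⟩)))
  rwa [pr_g] at this

lemma rel01 {n : ℕ} (h : 2 ≤ n) :
    (rh n 0 * rh n 1) ^ 2 = (rh n 1 * rh n 0) ^ 2 := by
  have := pr_rel (n := n) (Or.inl (Or.inl (Or.inr ⟨h, rfl⟩)))
  rw [map_mul, map_inv, map_pow, map_pow, map_mul, map_mul, mul_inv_eq_one] at this
  exact this

lemma relbr {n i : ℕ} (h1 : 1 ≤ i) (h2 : i + 1 ≤ n - 1) :
    rh n i * rh n (i + 1) * rh n i = rh n (i + 1) * rh n i * rh n (i + 1) := by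
  have := pr_rel (n := n) (Or.inl (Or.inr ⟨i, h1, h2, rfl⟩))
  rw [map_mul, map_inv, map_mul, map_mul, map_mul, mul_inv_eq_one] at this
  exact this

lemma comm_rho {n i j : ℕ} (h : i + 2 ≤ j) : Commute (rh n i) (rh n j) := by
  rcases le_or_gt n j with hj | hj
  · rw [rho_junk hj]; exact Commute.one_right _
  · have hj' : j ≤ n - 1 := by omega
    have := pr_rel (n := n) (Or.inr ⟨i, j, h, hj', rfl⟩)
    rw [map_mul, map_inv, map_mul, map_mul, mul_inv_eq_one] at this
    exact this

/-- `ρ_a ρ_{a+1} ⋯ ρ_{a+m-1}`. -/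
def upw (n a m : ℕ) : B n := ((List.range m).map fun k => rh n (a + k)).prod

/-- `ρ_{a+m-1} ⋯ ρ_{a+1} ρ_a`. -/
def dnw (n a m : ℕ) : B n := ((List.range m).reverse.map fun k => rh n (a + k)).prod

lemma upw_zero (n a : ℕ) : upw n a 0 = 1 := rfl

lemma dnw_zero (n a : ℕ) : dnw n a 0 = 1 := rfl

lemma upw_succ (n a m : ℕ) : upw n a (m + 1) = upw n a m * rh n (a + m) := by
  simp [upw, List.range_succ]

lemma dnw_succ (n a m : ℕ) : dnw n a (m + 1) = rh n (a + m) * dnw n a m := by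
  simp [dnw, List.range_succ]

lemma shift_fun (n a : ℕ) :
    ((fun k => rh n (a + k)) ∘ Nat.succ) = fun k => rh n ((a + 1) + k) := by
  funext k
  simp only [Function.comp_apply]
  congr 1
  omega

lemma upw_succ' (n a m : ℕ) : upw n a (m + 1) = rh n a * upw n (a + 1) m := by
  rw [upw, upw, List.range_succ_eq_map, List.map_cons, List.prod_cons, List.map_map,
    shift_fun, Nat.add_zero]

lemma dnw_succ' (n a m : ℕ) : dnw n a (m + 1) = dnw n (a + 1) m * rh n a := by
  rw [dnw, dnw, List.range_succ_eq_map, List.reverse_cons, List.map_append,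
    List.prod_append, ← List.map_reverse, List.map_map, shift_fun]
  simp

lemma XX_eq (n i : ℕ) : XX n i = dnw n 1 (i - 1) * rh n 0 * upw n 1 (i - 1) := by
  have h : (fun k => rh n (k + 1)) = (fun k => rh n (1 + k)) := by
    funext k; rw [Nat.add_comm]
  rw [XX, upw, dnw, h]

lemma CC_eq (r n j : ℕ) :
    CC r n j = dnw n 1 (j - 1) * rh n 0 ^ r * (dnw n 1 (j - 1))⁻¹ := by
  have h : (fun k => rh n (k + 1)) = (fun k => rh n (1 + k)) := by
    funext k; rw [Nat.add_comm]
  rw [CC, dnw, h]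

/-- The pure-braid element `T_i = ρ_{n-1}⋯ρ_{i+1} ρ_i^2 ρ_{i+1}⁻¹⋯ρ_{n-1}⁻¹`. -/
def Td (n i : ℕ) : B n :=
  dnw n (i + 1) (n - 1 - i) * rh n i ^ 2 * (dnw n (i + 1) (n - 1 - i))⁻¹

lemma Aq_eq (r n i q : ℕ) :
    Aq r n i n q = XX n i ^ ((q : ℤ) - (r : ℤ)) * Td n i * XX n i ^ ((r : ℤ) - (q : ℤ)) := by
  rw [Aq, Td, dnw]

lemma XX_one (n : ℕ) : XX n 1 = rh n 0 := by
  simp [XX_eq, upw_zero, dnw_zero]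

lemma XX_succ {n i : ℕ} (hi : 1 ≤ i) :
    XX n (i + 1) = rh n i * XX n i * rh n i := by
  obtain ⟨i', rfl⟩ : ∃ i', i = i' + 1 := ⟨i - 1, by omega⟩
  rw [XX_eq, XX_eq]
  have e1 : i' + 1 + 1 - 1 = i' + 1 := by omega
  have e2 : i' + 1 - 1 = i' := by omega
  rw [e1, e2, dnw_succ, upw_succ]
  have h : 1 + i' = i' + 1 := by omega
  rw [h]
  group

lemma comm_rho_upw {n a m j : ℕ} (h : a + m + 1 ≤ j) : Commute (rh n j) (upw n a m) := by
  refine Commute.list_prod_right _ _ ?_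
  intro x hx
  obtain ⟨k, hk, rfl⟩ := List.mem_map.1 hx
  have hk' := List.mem_range.1 hk
  exact (comm_rho (by omega)).symm

lemma comm_rho_dnw {n a m j : ℕ} (h : a + m + 1 ≤ j) : Commute (rh n j) (dnw n a m) := by
  refine Commute.list_prod_right _ _ ?_
  intro x hx
  obtain ⟨k, hk, rfl⟩ := List.mem_map.1 hx
  have hk' := List.mem_range.1 (List.mem_reverse.1 hk)
  exact (comm_rho (by omega)).symm

lemma comm_rho_X {n i j : ℕ} (hi : 1 ≤ i) (hij : i + 1 ≤ j) :
    Commute (rh n j) (XX n i) := by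
  rw [XX_eq]
  exact ((comm_rho_dnw (by omega)).mul_right
    (comm_rho (show 0 + 2 ≤ j by omega)).symm).mul_right (comm_rho_upw (by omega))

lemma comm_X_dnw {n i a m : ℕ} (hi : 1 ≤ i) (ha : i + 1 ≤ a) :
    Commute (XX n i) (dnw n a m) := by
  refine Commute.list_prod_right _ _ ?_
  intro x hx
  obtain ⟨k, hk, rfl⟩ := List.mem_map.1 hx
  exact (comm_rho_X hi (by omega)).symm

/-- Abstract braid computation used in the inductive step of `key2`. -/
lemma braid_key {G : Type*} [Group G] (a s t : G)
    (hbr : s * t * s = t * s * t) (hat : a * t = t * a)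
    (hIH : a * s * a * s = s * a * s * a) :
    (s * a * s * t) ^ 2 = (t * (s * a * s)) ^ 2 := by
  have hbr₁ : ∀ x : G, s * (t * (s * x)) = t * (s * (t * x)) := fun x => by
    rw [← mul_assoc, ← mul_assoc, hbr, mul_assoc, mul_assoc]
  have hbr₁' : ∀ x : G, t * (s * (t * x)) = s * (t * (s * x)) := fun x => (hbr₁ x).symm
  have hbr_end : t * (s * t) = s * (t * s) := by
    rw [← mul_assoc, ← hbr, mul_assoc]
  have hat₁ : ∀ x : G, a * (t * x) = t * (a * x) := fun x => by
    rw [← mul_assoc, hat, mul_assoc]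
  have hta₁ : ∀ x : G, t * (a * x) = a * (t * x) := fun x => (hat₁ x).symm
  have hta_end : t * (a * s) = a * (t * s) := by
    rw [← mul_assoc, ← hat, mul_assoc]
  have hIH₁ : ∀ x : G, a * (s * (a * (s * x))) = s * (a * (s * (a * x))) := fun x => by
    rw [← mul_assoc, ← mul_assoc, ← mul_assoc, hIH, mul_assoc, mul_assoc, mul_assoc]
  have eL : s * (a * (s * (t * (s * (a * (s * t))))))
      = s * (t * (s * (a * (s * (a * (t * s)))))) := by
    conv_lhs => rw [hbr₁]
    conv_lhs => rw [hat₁]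
    conv_lhs => enter [2, 2, 2, 2]; rw [hta₁]
    conv_lhs => rw [hbr_end]
    conv_lhs => rw [hIH₁]
  have eR : t * (s * (a * (s * (t * (s * (a * s))))))
      = s * (t * (s * (a * (s * (a * (t * s)))))) := by
    conv_lhs => rw [hbr₁]
    conv_lhs => rw [hat₁]
    conv_lhs => rw [hta_end]
    conv_lhs => rw [hbr₁']
  rw [pow_two, pow_two]
  simp only [mul_assoc]
  exact eL.trans eR.symm

/-- The key relation `(X_m ρ_m)^2 = (ρ_m X_m)^2`. -/
lemma key2 {n : ℕ} : ∀ m, 1 ≤ m → m + 1 ≤ n →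
    (XX n m * rh n m) ^ 2 = (rh n m * XX n m) ^ 2 := by
  intro m
  induction m with
  | zero => omega
  | succ m ih =>
    intro _ hmn
    rcases Nat.eq_zero_or_pos m with rfl | hm1
    · rw [XX_one]
      exact rel01 (by omega)
    · have hbr : rh n m * rh n (m + 1) * rh n m
          = rh n (m + 1) * rh n m * rh n (m + 1) := relbr hm1 (by omega)
      have hat : XX n m * rh n (m + 1) = rh n (m + 1) * XX n m :=
        (comm_rho_X hm1 (le_refl (m + 1))).symm
      have hIH : XX n m * rh n m * XX n m * rh n m
          = rh n m * XX n m * rh n m * XX n m := by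
        have h := ih hm1 (by omega)
        rw [pow_two, pow_two, ← mul_assoc, ← mul_assoc] at h
        exact h
      rw [XX_succ hm1]
      exact braid_key (XX n m) (rh n m) (rh n (m + 1)) hbr hat hIH

/-- Abstract commutation lemma: if `(at)^2 = (ta)^2` then
`a^{-s} t (tat)^s = (tat)^s t a^{-s}`. -/
lemma comm_key {G : Type*} [Group G] (a t : G) (h : a * t * a * t = t * a * t * a)
    (s : ℕ) : (a ^ s)⁻¹ * t * (t * a * t) ^ s = (t * a * t) ^ s * t * (a ^ s)⁻¹ := by
  have hca : (a * t * a * t) * a = a * (a * t * a * t) := by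
    calc (a * t * a * t) * a = a * (t * a * t * a) := by group
    _ = a * (a * t * a * t) := by rw [← h]
  have hct' : (a * t * a * t) * t = t * (a * t * a * t) := by
    calc (a * t * a * t) * t = (t * a * t * a) * t := by rw [h]
    _ = t * (a * t * a * t) := by group
  set c := a * t * a * t with hc
  have htat : t * a * t = a⁻¹ * c := by rw [hc]; group
  have hAc : Commute a c := hca.symm
  have hcomm : Commute a⁻¹ c := hAc.inv_left
  have hCt : Commute c t := hct'
  have hpow : (t * a * t) ^ s = a⁻¹ ^ s * c ^ s := by
    rw [htat, hcomm.mul_pow]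
  have e1 : c ^ s * t = t * c ^ s := (hCt.pow_left s).eq
  have e2 : c ^ s * a⁻¹ ^ s = a⁻¹ ^ s * c ^ s := ((hcomm.pow_pow s s).eq).symm
  rw [← inv_pow, hpow]
  have : a⁻¹ ^ s * c ^ s * t * a⁻¹ ^ s = a⁻¹ ^ s * t * (a⁻¹ ^ s * c ^ s) := by
    calc a⁻¹ ^ s * c ^ s * t * a⁻¹ ^ s
        = a⁻¹ ^ s * (c ^ s * t) * a⁻¹ ^ s := by group
      _ = a⁻¹ ^ s * (t * c ^ s) * a⁻¹ ^ s := by rw [e1]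
      _ = a⁻¹ ^ s * t * (c ^ s * a⁻¹ ^ s) := by group
      _ = a⁻¹ ^ s * t * (a⁻¹ ^ s * c ^ s) := by rw [e2]
  exact this.symm

/-- The key relation in the convenient flat form. -/
lemma key2' {n m : ℕ} (hm : 1 ≤ m) (hmn : m + 1 ≤ n) :
    XX n m * rh n m * XX n m * rh n m = rh n m * XX n m * rh n m * XX n m := by
  have h := key2 m hm hmn
  rw [pow_two, pow_two, ← mul_assoc, ← mul_assoc] at h
  exact h

/-- `V_i = ρ_{n-1} ⋯ ρ_{i+1} ρ_i`. -/
def Vv (n i : ℕ) : B n := dnw n (i + 1) (n - 1 - i) * rh n i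

lemma Vv_n (n : ℕ) : Vv n n = 1 := by
  have h0 : n - 1 - n = 0 := by omega
  rw [Vv, h0, dnw_zero, one_mul, rho_junk le_rfl]

lemma Vv_rec {n m : ℕ} (hmn : m + 1 ≤ n) : Vv n m = Vv n (m + 1) * rh n m := by
  rcases eq_or_lt_of_le hmn with h | h
  · have h1 : n - 1 - m = 0 := by omega
    have h2 : n - 1 - (m + 1) = 0 := by omega
    rw [Vv, Vv, h1, h2, dnw_zero, dnw_zero, one_mul, one_mul,
      rho_junk (show n ≤ m + 1 by omega), one_mul]
  · have h1 : n - 1 - m = (n - 1 - (m + 1)) + 1 := by omega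
    rw [Vv, Vv, h1, dnw_succ']

lemma comm_X_Vv {n m : ℕ} (hm : 1 ≤ m) : Commute (XX n m) (Vv n (m + 1)) := by
  rw [Vv]
  exact (comm_X_dnw hm (by omega)).mul_right (comm_rho_X hm (by omega)).symm

lemma TX_eq {n m : ℕ} (hm : 1 ≤ m) (hmn : m + 1 ≤ n) :
    Td n m * XX n m = Vv n m * XX n (m + 1) * (Vv n m)⁻¹ := by
  have hcom : Commute (XX n m) (dnw n (m + 1) (n - 1 - m)) := comm_X_dnw hm le_rfl
  rw [Td, Vv, XX_succ hm]
  have hcom' : (dnw n (m + 1) (n - 1 - m))⁻¹ * XX n m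
      = XX n m * (dnw n (m + 1) (n - 1 - m))⁻¹ := (hcom.inv_right.eq).symm
  calc dnw n (m + 1) (n - 1 - m) * rh n m ^ 2 * (dnw n (m + 1) (n - 1 - m))⁻¹ * XX n m
      = dnw n (m + 1) (n - 1 - m) * rh n m ^ 2 *
        ((dnw n (m + 1) (n - 1 - m))⁻¹ * XX n m) := by group
    _ = dnw n (m + 1) (n - 1 - m) * rh n m ^ 2 *
        (XX n m * (dnw n (m + 1) (n - 1 - m))⁻¹) := by rw [hcom']
    _ = dnw n (m + 1) (n - 1 - m) * rh n m *
        (rh n m * XX n m * rh n m) * (dnw n (m + 1) (n - 1 - m) * rh n m)⁻¹ := by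
        rw [pow_two]; group

lemma step_comm {n m : ℕ} (hm : 1 ≤ m) (hmn : m + 1 ≤ n) (s : ℕ) :
    (XX n m ^ s)⁻¹ * rh n m * XX n (m + 1) ^ s
      = XX n (m + 1) ^ s * rh n m * (XX n m ^ s)⁻¹ := by
  have h2 := comm_key (XX n m) (rh n m) (key2' hm hmn) s
  rw [XX_succ hm]
  exact h2

lemma Aq_prod (r n i : ℕ) : ∀ m : ℕ,
    ((List.range m).map fun t => Aq r n i n (1 + t)).prod
      = XX n i ^ (1 - (r : ℤ)) * (Td n i * XX n i) ^ m * XX n i ^ ((r : ℤ) - 1 - m) := by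
  intro m
  induction m with
  | zero =>
      rw [List.range_zero, List.map_nil, List.prod_nil, pow_zero, mul_one, ← zpow_add]
      norm_num
  | succ m ih =>
      rw [List.range_succ, List.map_append, List.prod_append, ih]
      simp only [List.map_cons, List.map_nil, List.prod_cons, List.prod_nil, mul_one]
      rw [Aq_eq]
      have c1 : ((1 + m : ℕ) : ℤ) = 1 + (m : ℤ) := by push_cast; ring
      have c2 : ((m + 1 : ℕ) : ℤ) = (m : ℤ) + 1 := by push_cast; ring
      rw [c1, c2, pow_succ]
      group

lemma Abr_eq {r n m : ℕ} (hr : 1 ≤ r) (hm : 1 ≤ m) (hmn : m + 1 ≤ n) :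
    Abr r n m n 1 = (XX n m ^ (r - 1))⁻¹ *
      (Vv n m * XX n (m + 1) ^ (r - 1) * (Vv n m)⁻¹) := by
  rw [Abr, Aq_prod]
  have e0 : (r : ℤ) - 1 - ((r - 1 : ℕ) : ℤ) = 0 := by omega
  have e1 : (1 : ℤ) - (r : ℤ) = -(((r - 1 : ℕ) : ℤ)) := by omega
  rw [e0, e1, zpow_neg, zpow_natCast, zpow_zero, mul_one]
  congr 1
  rw [TX_eq hm hmn, conj_pow]

/-- `P_i = ρ_{n-1}⋯ρ_{i+1} ρ_i^2 ρ_{i+1}⋯ρ_{n-1}`. -/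
def Pp (n i : ℕ) : B n :=
  dnw n (i + 1) (n - 1 - i) * rh n i ^ 2 * upw n (i + 1) (n - 1 - i)

lemma Pp_n (n : ℕ) : Pp n n = 1 := by
  have h0 : n - 1 - n = 0 := by omega
  rw [Pp, h0, dnw_zero, upw_zero, rho_junk le_rfl]
  simp

lemma T_Pp {n i : ℕ} (hin : i + 1 ≤ n) : Td n i * Pp n (i + 1) = Pp n i := by
  rcases eq_or_lt_of_le hin with h | h
  · have h0 : n - 1 - i = 0 := by omega
    rw [Td, h0, dnw_zero, h, Pp_n, Pp, h0, dnw_zero, upw_zero]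
    simp
  · have h1 : n - 1 - i = (n - 1 - (i + 1)) + 1 := by omega
    rw [Td, Pp, Pp, h1, dnw_succ', upw_succ']
    simp only [pow_two]
    group

lemma VV_tail (r n : ℕ) : ∀ m, m ≤ n →
    ((List.range m).map fun t => Aq r n (n - m + t) n r).prod = Pp n (n - m) := by
  intro m
  induction m with
  | zero =>
      intro _
      rw [List.range_zero, List.map_nil, List.prod_nil, Nat.sub_zero, Pp_n]
  | succ m ih =>
      intro hm
      rw [List.range_succ_eq_map, List.map_cons, List.prod_cons, List.map_map]
      have hf : ((fun t => Aq r n (n - (m + 1) + t) n r) ∘ Nat.succ)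
          = fun t => Aq r n (n - m + t) n r := by
        funext t
        simp only [Function.comp_apply]
        rw [show n - (m + 1) + Nat.succ t = n - m + t from by omega]
      rw [hf, ih (by omega), Nat.add_zero]
      have hAq : Aq r n (n - (m + 1)) n r = Td n (n - (m + 1)) := by
        rw [Aq_eq, sub_self, zpow_zero, one_mul, mul_one]
      rw [hAq]
      have hT := T_Pp (n := n) (i := n - (m + 1)) (by omega)
      have e : n - (m + 1) + 1 = n - m := by omega
      rw [e] at hT
      exact hT

lemma VV_eq (r n : ℕ) (hn : 1 ≤ n) : VV r n 1 n r = Pp n 1 := by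
  rw [VV]
  have hf : (fun t => Aq r n (1 + t) n r) = fun t => Aq r n (n - (n - 1) + t) n r := by
    funext t
    rw [show n - (n - 1) + t = 1 + t from by omega]
  have := VV_tail r n (n - 1) (by omega)
  rw [hf]
  rw [this]
  congr 1
  omega

lemma Pp1_eq {n : ℕ} (hn : 2 ≤ n) :
    Pp n 1 = dnw n 1 (n - 1) * upw n 1 (n - 1) := by
  have h1 : n - 1 = (n - 2) + 1 := by omega
  have h2 : n - 1 - 1 = n - 2 := by omega
  rw [Pp, h2]
  conv_rhs => rw [h1, dnw_succ', upw_succ']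
  simp only [pow_two]
  group

lemma Q_prod (r n : ℕ) (hr : 1 ≤ r) : ∀ j, j ≤ n - 1 →
    ((List.range j).map fun t => Abr r n (n - 1 - t) n 1).prod
      = XX n n ^ (r - 1) *
        (Vv n (n - j) * (XX n (n - j) ^ (r - 1))⁻¹ * (Vv n (n - j))⁻¹) := by
  intro j
  induction j with
  | zero =>
      intro _
      rw [List.range_zero, List.map_nil, List.prod_nil, Nat.sub_zero, Vv_n]
      simp
  | succ j ih =>
      intro hj
      rw [List.range_succ, List.map_append, List.prod_append, ih (by omega)]
      simp only [List.map_cons, List.map_nil, List.prod_cons, List.prod_nil, mul_one]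
      have hm1 : 1 ≤ n - 1 - j := by omega
      have hmn : (n - 1 - j) + 1 ≤ n := by omega
      have em1 : n - j = (n - 1 - j) + 1 := by omega
      have em2 : n - (j + 1) = n - 1 - j := by omega
      rw [em1, em2, Abr_eq hr hm1 hmn]
      set m := n - 1 - j with hmdef
      have hstar : Vv n (m + 1) * (XX n (m + 1) ^ (r - 1))⁻¹ * (Vv n (m + 1))⁻¹ *
          ((XX n m ^ (r - 1))⁻¹ * (Vv n m * XX n (m + 1) ^ (r - 1) * (Vv n m)⁻¹))
          = Vv n m * (XX n m ^ (r - 1))⁻¹ * (Vv n m)⁻¹ := by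
        have hP : Commute (XX n m) (Vv n (m + 1)) := comm_X_Vv hm1
        have hPZ : (Vv n (m + 1))⁻¹ * ((XX n m ^ (r - 1))⁻¹ * Vv n (m + 1))
            = (XX n m ^ (r - 1))⁻¹ := by
          rw [((hP.pow_left (r - 1)).inv_left).eq]
          group
        have hsc := step_comm hm1 hmn (r - 1)
        rw [Vv_rec hmn]
        set P := Vv n (m + 1)
        set ρ := rh n m
        set Y := XX n (m + 1) ^ (r - 1)
        set Z := (XX n m ^ (r - 1))⁻¹
        calc P * Y⁻¹ * P⁻¹ * (Z * (P * ρ * Y * (P * ρ)⁻¹))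
            = P * (Y⁻¹ * (P⁻¹ * (Z * P)) * ρ * Y * ρ⁻¹) * P⁻¹ := by group
          _ = P * (Y⁻¹ * Z * ρ * Y * ρ⁻¹) * P⁻¹ := by rw [hPZ]
          _ = P * (Y⁻¹ * (Z * ρ * Y) * ρ⁻¹) * P⁻¹ := by group
          _ = P * (Y⁻¹ * (Y * ρ * Z) * ρ⁻¹) * P⁻¹ := by rw [hsc]
          _ = P * ρ * Z * (P * ρ)⁻¹ := by group
      rw [mul_assoc, hstar]

end Aux



/-- Let `r ≥ 2`, `n ≥ 1`.  In `B(r,n)` one has the identity `D_n = X_n^r`. -/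
theorem D_n_eq_X_n_pow (r n : ℕ) (hr : 2 ≤ r) (hn : 1 ≤ n) :
    DD r n n = XX n n ^ r := by
  rcases Nat.lt_or_ge n 2 with hn2 | hn2
  · -- the case `n = 1`
    have h1 : n = 1 := by omega
    subst h1
    rw [DD, CC_eq, VV, XX_eq]
    simp [dnw_zero, upw_zero]
  · -- the case `n ≥ 2`
    have hsr : r = (r - 1) + 1 := by omega
    rw [DD]
    have hQ := Q_prod r n (by omega) (n - 1) le_rfl
    have e1 : n - (n - 1) = 1 := by omega
    rw [e1] at hQ
    rw [hQ, CC_eq, VV_eq r n (by omega), Pp1_eq hn2]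
    have hV1 : Vv n 1 = dnw n 1 (n - 1) := by
      have h2 : n - 1 - 1 = n - 2 := by omega
      rw [Vv, h2]
      conv_rhs => rw [show n - 1 = (n - 2) + 1 from by omega, dnw_succ']
    rw [hV1, XX_one]
    have hr0 : (rh n 0 ^ (r - 1))⁻¹ * rh n 0 ^ r = rh n 0 := by
      have hx : rh n 0 ^ r = rh n 0 ^ (r - 1) * rh n 0 := by
        conv_lhs => rw [hsr]
        rw [pow_succ]
      rw [hx]
      group
    calc XX n n ^ (r - 1) *
          (dnw n 1 (n - 1) * (rh n 0 ^ (r - 1))⁻¹ * (dnw n 1 (n - 1))⁻¹) *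
          (dnw n 1 (n - 1) * rh n 0 ^ r * (dnw n 1 (n - 1))⁻¹) *
          (dnw n 1 (n - 1) * upw n 1 (n - 1))
        = XX n n ^ (r - 1) *
          (dnw n 1 (n - 1) * ((rh n 0 ^ (r - 1))⁻¹ * rh n 0 ^ r) * upw n 1 (n - 1)) := by
          group
      _ = XX n n ^ (r - 1) * (dnw n 1 (n - 1) * rh n 0 * upw n 1 (n - 1)) := by rw [hr0]
      _ = XX n n ^ (r - 1) * XX n n := by rw [← XX_eq]
      _ = XX n n ^ r := by
          conv_rhs => rw [hsr]
          rw [pow_succ]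

end MonomialBraid
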